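/- arXiv:0907.4169 — 3 statements merged into one kernel-verified Lean document; each statement's English description precedes it below -/
import Mathlib

section
/- Let M_i = (A_i, X_i, S_i, start_i, δ_i, γ_i) for 1 ≤ i ≤ n be Moore machines with representing functions f_i (i.e., f_i(z) = γ_i(δ_i*(start_i, z)) for all z ∈ A_i*). Let A be an alphabet, h : X_1 × … × X_n → X an output map, and g a connection map with g(i, a, x) ∈ A_i* for a ∈ A and x ∈ X. Define f : A* → X and u_i : A* → A_i* by the simultaneous recursion f(w) = h(f_1(u_1(w)), …, f_n(u_n(w))), u_i(Λ) = Λ, and u_i(wa) = u_i(w) ∘ g(i, a, f(w)). Let M = (A, X, S, start, δ, γ) be the general product of the M_i with maps g and h. Then f is the representing function of M: for all w ∈ A*, f(w) = γ(δ*(start, w)). -/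
/-!
By induction on `w`, the state of the general product after reading `w` is the tuple of the
states the components reach on the words `uᵢ(w)`: at the next letter `a`, the product's current
output is `f w`, so each component reads exactly the extension `g(i, a, f w)` of `uᵢ(w)`.
-/

/-- Extension of a transition function `δ : S → A → S` to strings:
`runStar δ s Λ = s` and `runStar δ s (w ++ [a]) = δ (runStar δ s w) a`. -/
def runStar {S A : Type*} (δ : S → A → S) (s : S) (w : List A) : S :=
  w.foldl δ s

section RunStar

variable {S A : Type*} (δ : S → A → S) (s : S)

@[simp]
theorem runStar_nil : runStar δ s [] = s := rfl

theorem runStar_append (w v : List A) :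
    runStar δ s (w ++ v) = runStar δ (runStar δ s w) v :=
  List.foldl_append

@[simp]
theorem runStar_append_singleton (w : List A) (a : A) :
    runStar δ s (w ++ [a]) = δ (runStar δ s w) a := by
  rw [runStar_append]; rfl

end RunStar

section GeneralProduct

variable {n : ℕ} {A X : Type*} {Ai Xi Si : Fin n → Type*}

def productOutput (γ : ∀ i, Si i → Xi i) (h : (∀ i, Xi i) → X) (s : ∀ i, Si i) : X :=
  h fun i => γ i (s i)

def productStep (δ : ∀ i, Si i → Ai i → Si i) (γ : ∀ i, Si i → Xi i) (h : (∀ i, Xi i) → X)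
    (g : ∀ i : Fin n, A → X → List (Ai i)) (s : ∀ i, Si i) (a : A) : ∀ i, Si i :=
  fun i => runStar (δ i) (s i) (g i a (productOutput γ h s))

theorem runStar_component_eq_runStar_productStep (start : ∀ i, Si i)
    (δ : ∀ i, Si i → Ai i → Si i) (γ : ∀ i, Si i → Xi i) (h : (∀ i, Xi i) → X)
    (g : ∀ i : Fin n, A → X → List (Ai i)) (f : List A → X) (u : ∀ i : Fin n, List A → List (Ai i))
    (hf : ∀ w, f w = h fun i => γ i (runStar (δ i) (start i) (u i w)))
    (hu0 : ∀ i, u i [] = [])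
    (hua : ∀ i w a, u i (w ++ [a]) = u i w ++ g i a (f w)) (w : List A) (i : Fin n) :
    runStar (δ i) (start i) (u i w) = runStar (productStep δ γ h g) start w i := by
  induction w using List.reverseRecOn generalizing i with
  | nil => rw [hu0, runStar_nil, runStar_nil]
  | append_singleton w a ih =>
    have hfw : f w = productOutput γ h (runStar (productStep δ γ h g) start w) := by
      simp only [hf w, ih, productOutput]
    rw [hua, runStar_append, ih, hfw, runStar_append_singleton]
    rfl

end GeneralProduct

/-- if each `fi i` represents the Moore machine `Mᵢ` and `f`, `u` are
defined by the simultaneous recursion with connection map `g` and output map `h`,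
then `f` is the representing function of the general product of the `Mᵢ`. -/
theorem stmt0 {n : ℕ} {A X : Type*} {Ai Xi Si : Fin n → Type*}
    (start : ∀ i, Si i) (δ : ∀ i, Si i → Ai i → Si i) (γ : ∀ i, Si i → Xi i)
    (fi : ∀ i, List (Ai i) → Xi i)
    (hrep : ∀ i z, fi i z = γ i (runStar (δ i) (start i) z))
    (h : (∀ i, Xi i) → X) (g : ∀ i : Fin n, A → X → List (Ai i))
    (f : List A → X) (u : ∀ i : Fin n, List A → List (Ai i))
    (hf : ∀ w, f w = h fun i => fi i (u i w))
    (hu0 : ∀ i, u i [] = [])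
    (hua : ∀ i w a, u i (w ++ [a]) = u i w ++ g i a (f w)) :
    ∀ w : List A,
      f w = h fun i => γ i
        (runStar
          (fun (s : ∀ j, Si j) (a : A) => fun j =>
            runStar (δ j) (s j) (g j a (h fun k => γ k (s k))))
          start w i) := by
  have hf' : ∀ w, f w = h fun i => γ i (runStar (δ i) (start i) (u i w)) := by
    simpa only [hrep] using hf
  intro w
  rw [hf' w]
  simp only [runStar_component_eq_runStar_productStep start δ γ h g f u hf' hu0 hua]
  rfl
end

section
/- Let f_i : A_i* → X_i for 1 ≤ i ≤ n be string functions each of which is finite (i.e., each set S_{f_i} = { (f_i)_z : z ∈ A_i* } is finite), and let f : A* → X and u_i : A* → A_i* be defined by the simultaneous recursion f(w) = h(f_1(u_1(w)), …, f_n(u_n(w))), u_i(Λ) = Λ, u_i(wa) = u_i(w) ∘ g(i, a, f(w)), for an output map h and a connection map g with g(i, a, x) ∈ A_i*. Then f is finite, and the cardinality of S_f is at most the product of the cardinalities of the S_{f_i}. -/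
/-!
The left quotient `f_w` is determined by the tuple of left quotients `(f_i)_{u_i(w)}`: if two
words `w, w'` give the same tuple, then `f(w) = f(w')` because `f` reads its factors only at the
empty suffix, the connection words `g(i, a, f(w))` appended next then agree, and so the tuples
stay equal along every common continuation. Hence `w ↦ f_w` factors through a map into
`∏ i, S_{f_i}`, which bounds `|S_f|`.
-/

/-- The left quotient `f_w`, `f_w(u) = f(w ∘ u)`. -/
def leftQuot {A X : Type*} (f : List A → X) (w : List A) : List A → X :=
  fun u => f (w ++ u)

/-- The state set `S_f = { f_w : w ∈ A* }`; `f` is called finite if `S_f` is finite. -/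
def Sf {A X : Type*} (f : List A → X) : Set (List A → X) :=
  Set.range (leftQuot f)

open Function

theorem leftQuot_append {A X : Type*} (f : List A → X) (w v : List A) :
    leftQuot f (w ++ v) = leftQuot (leftQuot f w) v := by
  funext s
  simp [leftQuot, List.append_assoc]

@[simp]
theorem leftQuot_apply_nil {A X : Type*} (f : List A → X) (w : List A) :
    leftQuot f w [] = f w := by
  simp [leftQuot]

theorem Function.FactorsThrough.injective_comp_rangeSplitting {α β γ : Type*} {F : α → β}
    {G : α → γ} (hFG : F.FactorsThrough G) : Injective (G ∘ Set.rangeSplitting F) := by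
  intro x y hxy
  apply Subtype.ext
  rw [← Set.apply_rangeSplitting F x, ← Set.apply_rangeSplitting F y]
  exact hFG hxy

theorem Function.FactorsThrough.finite_range {α β γ : Type*} [Finite γ] {F : α → β}
    {G : α → γ} (hFG : F.FactorsThrough G) : (Set.range F).Finite :=
  Set.finite_coe_iff.1 (Finite.of_injective _ hFG.injective_comp_rangeSplitting)

theorem Function.FactorsThrough.card_range_le {α β γ : Type*} [Finite γ] {F : α → β}
    {G : α → γ} (hFG : F.FactorsThrough G) : Nat.card (Set.range F) ≤ Nat.card γ :=
  Nat.card_le_card_of_injective _ hFG.injective_comp_rangeSplitting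

section Recursion

variable {ι A X : Type*} {Ai Xi : ι → Type*} {fi : ∀ i, List (Ai i) → Xi i}
  {h : (∀ i, Xi i) → X} {g : ∀ i, A → X → List (Ai i)} {f : List A → X}
  {u : ∀ i, List A → List (Ai i)}

variable (fi u) in
def componentStates (w : List A) : ∀ i, Sf (fi i) :=
  fun i => ⟨leftQuot (fi i) (u i w), Set.mem_range_self _⟩

theorem componentStates_eq_iff {w w' : List A} :
    componentStates fi u w = componentStates fi u w' ↔
      ∀ i, leftQuot (fi i) (u i w) = leftQuot (fi i) (u i w') := by
  simp only [componentStates, funext_iff (f := componentStates fi u w), Subtype.ext_iff]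

theorem eq_of_componentStates_eq (hf : ∀ w, f w = h fun i => fi i (u i w)) {w w' : List A}
    (hw : componentStates fi u w = componentStates fi u w') : f w = f w' := by
  rw [hf, hf]
  congr 1
  funext i
  simpa using congrFun (componentStates_eq_iff.1 hw i) []

theorem componentStates_append_singleton (hf : ∀ w, f w = h fun i => fi i (u i w))
    (hua : ∀ i w a, u i (w ++ [a]) = u i w ++ g i a (f w)) {w w' : List A}
    (hw : componentStates fi u w = componentStates fi u w') (a : A) :
    componentStates fi u (w ++ [a]) = componentStates fi u (w' ++ [a]) := by
  refine componentStates_eq_iff.2 fun i => ?_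
  rw [hua, hua, eq_of_componentStates_eq hf hw, leftQuot_append, leftQuot_append,
    componentStates_eq_iff.1 hw i]

theorem componentStates_append (hf : ∀ w, f w = h fun i => fi i (u i w))
    (hua : ∀ i w a, u i (w ++ [a]) = u i w ++ g i a (f w)) {w w' : List A}
    (hw : componentStates fi u w = componentStates fi u w') (v : List A) :
    componentStates fi u (w ++ v) = componentStates fi u (w' ++ v) := by
  induction v using List.reverseRecOn with
  | nil => simpa using hw
  | append_singleton v a ih =>
    simpa only [← List.append_assoc] using componentStates_append_singleton hf hua ih a

theorem leftQuot_factorsThrough_componentStates (hf : ∀ w, f w = h fun i => fi i (u i w))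
    (hua : ∀ i w a, u i (w ++ [a]) = u i w ++ g i a (f w)) :
    (leftQuot f).FactorsThrough (componentStates fi u) := fun w w' hw => by
  funext v
  exact eq_of_componentStates_eq hf (componentStates_append hf hua hw v)

end Recursion

theorem stmt6_general {n : ℕ} {A X : Type*} {Ai Xi : Fin n → Type*}
    (fi : ∀ i, List (Ai i) → Xi i)
    (hfin : ∀ i, (Sf (fi i)).Finite)
    (h : (∀ i, Xi i) → X) (g : ∀ i : Fin n, A → X → List (Ai i))
    (f : List A → X) (u : ∀ i : Fin n, List A → List (Ai i))
    (hf : ∀ w, f w = h fun i => fi i (u i w))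
    (hua : ∀ i w a, u i (w ++ [a]) = u i w ++ g i a (f w)) :
    (Sf f).Finite ∧ Nat.card (Sf f) ≤ ∏ i, Nat.card (Sf (fi i)) := by
  have : ∀ i, Finite (Sf (fi i)) := fun i => (hfin i).to_subtype
  have hfactor := leftQuot_factorsThrough_componentStates hf hua
  exact ⟨hfactor.finite_range, hfactor.card_range_le.trans_eq Nat.card_pi⟩

/-- if each factor `fi i` is finite and `f` is defined from them by the
simultaneous recursion scheme, then `f` is finite and `|S_f| ≤ ∏ i, |S_{fᵢ}|`. -/
theorem stmt6 {n : ℕ} {A X : Type*} {Ai Xi : Fin n → Type*}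
    (fi : ∀ i, List (Ai i) → Xi i)
    (hfin : ∀ i, (Sf (fi i)).Finite)
    (h : (∀ i, Xi i) → X) (g : ∀ i : Fin n, A → X → List (Ai i))
    (f : List A → X) (u : ∀ i : Fin n, List A → List (Ai i))
    (hf : ∀ w, f w = h fun i => fi i (u i w))
    (hu0 : ∀ i, u i [] = [])
    (hua : ∀ i w a, u i (w ++ [a]) = u i w ++ g i a (f w)) :
    (Sf f).Finite ∧ Nat.card (Sf f) ≤ ∏ i, Nat.card (Sf (fi i)) :=
  stmt6_general fi hfin h g f u hf hua
end

section
/- Fix an alphabet A and n ≥ 1, and let T_2 and the cascade strings u_1, …, u_n be as in the ripple-carry construction: T_2(Λ) = 0, T_2(wa) = T_2(w) + 1 mod 2; u_i(Λ) = Λ; u_1(wa) = u_1(w) ∘ ⟨a⟩; for i ≥ 2, u_i(wa) = u_i(w) ∘ ⟨a⟩ if T_2(u_j(w)) = 1 for every j < i, and u_i(wa) = u_i(w) otherwise. Then for every 1 ≤ i ≤ n and every w ∈ A*, T_2(u_i(w)) = ⌊|w| / 2^{i-1}⌋ mod 2, i.e., T_2(u_i(w)) is the (i−1)-st binary digit of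 |w|. -/
/-!
Reading `T₂` as a parity, the cascade is a binary counter: the string `uᵢ` grows exactly when the
`i`-th digit of the length must flip, and incrementing `l` flips digit `i` precisely when all
lower digits of `l` are `1`, i.e. when `2 ^ i ∣ l + 1`. Induction on `w` then tracks all digits
at once.
-/

namespace Nat

theorem two_pow_succ_dvd_add_one_iff (i l : ℕ) :
    2 ^ (i + 1) ∣ l + 1 ↔ l % 2 = 1 ∧ 2 ^ i ∣ l / 2 + 1 := by
  rcases Nat.mod_two_eq_zero_or_one l with hl | hl
  · have hodd : ¬ 2 ∣ l + 1 := by omega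
    simp only [hl, zero_ne_one, false_and, iff_false]
    exact fun h => hodd ((dvd_pow_self 2 (succ_ne_zero i)).trans h)
  · have hl' : l + 1 = 2 * (l / 2 + 1) := by omega
    rw [hl', pow_succ', Nat.mul_dvd_mul_iff_left two_pos]
    simp [hl]

theorem forall_lt_div_two_pow_mod_two_eq_one_iff (i l : ℕ) :
    (∀ j < i, l / 2 ^ j % 2 = 1) ↔ 2 ^ i ∣ l + 1 := by
  induction i generalizing l with
  | zero => simp
  | succ i ih =>
    have hdiv (m : ℕ) : l / 2 ^ (m + 1) = l / 2 / 2 ^ m := by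
      rw [pow_succ', Nat.div_div_eq_div_mul]
    simp only [Nat.forall_lt_succ_left, pow_zero, Nat.div_one, hdiv, ih, two_pow_succ_dvd_add_one_iff]

theorem add_one_div_two_pow_mod_two (i l : ℕ) :
    (l + 1) / 2 ^ i % 2 =
      if ∀ j < i, l / 2 ^ j % 2 = 1 then (l / 2 ^ i % 2 + 1) % 2 else l / 2 ^ i % 2 := by
  simp only [forall_lt_div_two_pow_mod_two_eq_one_iff, Nat.succ_div]
  split_ifs <;> omega

end Nat

/-- In the paper's numbering, the factor `i : Fin n` is the `(i + 1)`-st counter. -/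
theorem stmt13 {A : Type*} (n : ℕ) (hn : 1 ≤ n)
    (T2 : List A → ℕ)
    (hT0 : T2 [] = 0)
    (hTa : ∀ (w : List A) (a : A), T2 (w ++ [a]) = (T2 w + 1) % 2)
    (u : Fin n → List A → List A)
    (hu0 : ∀ i, u i [] = [])
    (hu1 : ∀ (w : List A) (a : A), u ⟨0, hn⟩ (w ++ [a]) = u ⟨0, hn⟩ w ++ [a])
    (huiYes : ∀ (i : Fin n) (w : List A) (a : A), 0 < i.val →
      (∀ j < i, T2 (u j w) = 1) → u i (w ++ [a]) = u i w ++ [a])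
    (huiNo : ∀ (i : Fin n) (w : List A) (a : A), 0 < i.val →
      ¬ (∀ j < i, T2 (u j w) = 1) → u i (w ++ [a]) = u i w) :
    ∀ (i : Fin n) (w : List A), T2 (u i w) = (w.length / 2 ^ i.val) % 2 := by
  have step : ∀ (i : Fin n) (w : List A) (a : A), T2 (u i (w ++ [a])) =
      if ∀ j < i, T2 (u j w) = 1 then (T2 (u i w) + 1) % 2 else T2 (u i w) := by
    intro i w a
    rcases Nat.eq_zero_or_pos i.val with hi | hi
    · obtain rfl : i = ⟨0, hn⟩ := Fin.ext hi
      have hgate : ∀ j < (⟨0, hn⟩ : Fin n), T2 (u j w) = 1 :=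
        fun j hj => absurd hj (Nat.not_lt_zero j)
      rw [if_pos hgate, hu1, hTa]
    · split_ifs with hgate
      · rw [huiYes i w a hi hgate, hTa]
      · rw [huiNo i w a hi hgate]
  intro i w
  induction w using List.reverseRecOn generalizing i with
  | nil => simp [hu0, hT0]
  | append_singleton w a ih =>
    have hgate : (∀ j < i, T2 (u j w) = 1) ↔ ∀ j < i.val, w.length / 2 ^ j % 2 = 1 :=
      ⟨fun h j hj => ih ⟨j, hj.trans i.isLt⟩ ▸ h _ hj, fun h j hj => (ih j).trans (h j hj)⟩
    simp only [step, hgate]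
    simp only [ih, List.length_append, List.length_singleton, Nat.add_one_div_two_pow_mod_two]
end
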